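/- Let 𝒜 be a unital C*-algebra, let a, b ∈ 𝒜 be positive elements, and let w₁, w₂ ∈ 𝒜 satisfy ‖w₁‖ ≤ 1 and ‖w₂‖ ≤ 1. Then ‖a^(1/2) w₁ a^(1/2) + b^(1/2) w₂ b^(1/2)‖ ≤ ‖a + b‖. -/

import Mathlib

/-!
In the Hilbert `A`-module `A × A`, with `⟪x, y⟫ = y₁ * star x₁ + y₂ * star x₂`, put
`x = (√a, √b)` and `y = (√a w₁, √b w₂)`. The element to bound is `⟪x, y⟫`, `‖x‖² = ‖a + b‖`, and
`‖y‖² = ‖√a w₁ w₁* √a + √b w₂ w₂* √b‖ ≤ ‖a + b‖` because `wᵢ wᵢ* ≤ 1`; Cauchy–Schwarz concludes.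
-/

namespace CStarAlgebra

variable {A : Type*} [CStarAlgebra A] [PartialOrder A] [StarOrderedRing A]

theorem norm_mul_star_add_mul_star_le (x₁ x₂ y₁ y₂ : A) :
    ‖y₁ * star x₁ + y₂ * star x₂‖ ≤
      √‖x₁ * star x₁ + x₂ * star x₂‖ * √‖y₁ * star y₁ + y₂ * star y₂‖ :=
  CStarModule.norm_inner_le (A := A) (WithCStarModule A (A × A))
    (x := (WithCStarModule.equiv A (A × A)).symm (x₁, x₂))
    (y := (WithCStarModule.equiv A (A × A)).symm (y₁, y₂))

theorem mul_mul_star_le_mul_star_of_norm_le_one (x : A) {w : A} (hw : ‖w‖ ≤ 1) :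
    x * w * star (x * w) ≤ x * star x :=
  calc x * w * star (x * w) = x * (w * star w) * star x := by simp only [star_mul, mul_assoc]
    _ ≤ ‖w * star w‖ • (x * star x) := star_right_conjugate_le_norm_smul
    _ ≤ x * star x := by
      refine smul_le_of_le_one_left (mul_star_self_nonneg x) ?_
      rw [CStarRing.norm_self_mul_star]
      exact mul_le_one₀ hw (norm_nonneg w) hw

end CStarAlgebra

theorem sqrt_contraction_sqrt_bound_cstar {A : Type*} [CStarAlgebra A]
    [PartialOrder A] [StarOrderedRing A]
    (a b w₁ w₂ : A) (ha : 0 ≤ a) (hb : 0 ≤ b)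
    (hw₁ : ‖w₁‖ ≤ 1) (hw₂ : ‖w₂‖ ≤ 1) :
    ‖CFC.sqrt a * w₁ * CFC.sqrt a + CFC.sqrt b * w₂ * CFC.sqrt b‖ ≤ ‖a + b‖ := by
  set x₁ := CFC.sqrt a
  set x₂ := CFC.sqrt b
  have hx₁ : star x₁ = x₁ := (CFC.sqrt_nonneg a).isSelfAdjoint.star_eq
  have hx₂ : star x₂ = x₂ := (CFC.sqrt_nonneg b).isSelfAdjoint.star_eq
  have hrows : x₁ * star x₁ + x₂ * star x₂ = a + b := by
    rw [hx₁, hx₂, CFC.sqrt_mul_sqrt_self a ha, CFC.sqrt_mul_sqrt_self b hb]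
  have hcontract : ‖x₁ * w₁ * star (x₁ * w₁) + x₂ * w₂ * star (x₂ * w₂)‖ ≤ ‖a + b‖ := by
    refine CStarAlgebra.norm_le_norm_of_nonneg_of_le
      (add_nonneg (mul_star_self_nonneg _) (mul_star_self_nonneg _)) ?_
    rw [← hrows]
    exact add_le_add (CStarAlgebra.mul_mul_star_le_mul_star_of_norm_le_one x₁ hw₁)
      (CStarAlgebra.mul_mul_star_le_mul_star_of_norm_le_one x₂ hw₂)
  calc ‖x₁ * w₁ * x₁ + x₂ * w₂ * x₂‖
      = ‖x₁ * w₁ * star x₁ + x₂ * w₂ * star x₂‖ := by rw [hx₁, hx₂]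
    _ ≤ √‖a + b‖ * √‖x₁ * w₁ * star (x₁ * w₁) + x₂ * w₂ * star (x₂ * w₂)‖ := by
      rw [← hrows]
      exact CStarAlgebra.norm_mul_star_add_mul_star_le x₁ x₂ (x₁ * w₁) (x₂ * w₂)
    _ ≤ √‖a + b‖ * √‖a + b‖ := by gcongr
    _ = ‖a + b‖ := Real.mul_self_sqrt (norm_nonneg _)
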